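/- For every real α with 0 < α < 0.1142, with p = (1+√5)/2 and q = 1, every (complex) eigenvalue of the matrix M(α,p,q) has absolute value strictly less than 1; i.e., the spectral radius of M(α,p,q) is strictly less than 1. -/

import Mathlib

/-!
Conjugating `M` by a positive diagonal matrix `diag w` does not change its spectrum, and the
`ℓ^∞` operator norm of `diag w⁻¹ * M * diag w` is the largest weighted row sum
`max_i (∑_j |M i j| w_j) / w_i`, which therefore bounds the spectral radius. At `p = φ`, `q = 1`,
using `φ⁻² = 2 - φ` and `φ⁴ = 3φ + 2`, the choice `w = (1, 1.836, 1)` makes every weighted row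
sum smaller than `1` for `0 < α < 0.1142`.
-/

noncomputable section

/-- The matrix `M(α, p, q)` of the recurrence `S(n+2) = S(n) · M`. -/
def Mmat (α p q : ℝ) : Matrix (Fin 3) (Fin 3) ℝ :=
  !![p ^ (-2 : ℤ) * q ^ (-2 : ℤ) + α * q⁻¹, α * p * q⁻¹ + α ^ 2 * p ^ 4, 0;
     p ^ (-2 : ℤ) * q ^ (-2 : ℤ) + α * q⁻¹, α * p * q⁻¹ + α ^ 2 * p ^ 4 + α * p * q,
       α * q + p ^ (-2 : ℤ) * q ^ 2;
     0, α ^ 2 * p ^ 4 + α * p * q, α * q + p ^ (-2 : ℤ) * q ^ 2]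

open Real
open scoped goldenRatio

section WeightedRowSum

open Matrix

variable {n : Type*} [Fintype n] [DecidableEq n]

theorem spectrum_diagonal_inv_mul_mul_diagonal {𝕜 : Type*} [Field 𝕜] (w : n → 𝕜)
    (hw : ∀ i, w i ≠ 0) (A : Matrix n n 𝕜) :
    spectrum 𝕜 (diagonal w⁻¹ * A * diagonal w) = spectrum 𝕜 A :=
  spectrum.units_conjugate' (u := ⟨diagonal w, diagonal w⁻¹, by simp [hw], by simp [hw]⟩)

attribute [local instance] Matrix.linftyOpNormedRing Matrix.linftyOpNormedAlgebra in
theorem spectralRadius_lt_one_of_weighted_row_sum_lt {𝕜 : Type*} [RCLike 𝕜] [Nonempty n]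
    {A : Matrix n n 𝕜} (w : n → ℝ) (hw : ∀ i, 0 < w i) (h : ∀ i, ∑ j, ‖A i j‖ * w j < w i) :
    spectralRadius 𝕜 A < 1 := by
  set d : n → 𝕜 := fun i => (w i : 𝕜)
  have hd : ∀ i, d i ≠ 0 := fun i => RCLike.ofReal_ne_zero.2 (hw i).ne'
  set B := diagonal d⁻¹ * A * diagonal d
  have hB : ‖B‖₊ < 1 := by
    rw [linfty_opNNNorm_def, Finset.sup_lt_iff (by simp)]
    intro i _
    rw [← NNReal.coe_lt_coe]
    push_cast
    calc ∑ j, ‖B i j‖ = (∑ j, ‖A i j‖ * w j) / w i := by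
          simp only [B, d, diagonal_mul, mul_diagonal, Pi.inv_apply, norm_mul, norm_inv,
            RCLike.norm_ofReal, abs_of_pos (hw _), Finset.sum_div]
          exact Finset.sum_congr rfl fun j _ => by field_simp
      _ < 1 := (div_lt_one (hw i)).2 (h i)
  calc spectralRadius 𝕜 A = spectralRadius 𝕜 B := by
        rw [spectralRadius, spectralRadius, spectrum_diagonal_inv_mul_mul_diagonal d hd]
    _ ≤ ‖B‖₊ := spectrum.spectralRadius_le_nnnorm B
    _ < 1 := mod_cast hB

end WeightedRowSum

theorem goldenRatio_zpow_neg_two : φ ^ (-2 : ℤ) = 2 - φ := by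
  rw [zpow_neg, zpow_two, ← sq]
  exact inv_eq_of_mul_eq_one_left (by linear_combination (1 - φ) * goldenRatio_sq)

theorem goldenRatio_pow_four : φ ^ 4 = 3 * φ + 2 := by
  rw [show φ ^ 4 = (φ ^ 2) ^ 2 by ring, goldenRatio_sq]
  linear_combination goldenRatio_sq

theorem goldenRatio_gt_d3 : 1.618 < φ := by
  have : 2.236 < √5 := by rw [lt_sqrt] <;> norm_num
  unfold goldenRatio
  linarith

theorem Mmat_goldenRatio_one (α : ℝ) :
    Mmat α φ 1 =
      !![2 - φ + α, α * φ + α ^ 2 * (3 * φ + 2), 0;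
         2 - φ + α, α * φ + α ^ 2 * (3 * φ + 2) + α * φ, 2 - φ + α;
         0, α * φ + α ^ 2 * (3 * φ + 2), 2 - φ + α] := by
  simp only [Mmat, one_zpow, one_pow, inv_one, mul_one, goldenRatio_zpow_neg_two,
    goldenRatio_pow_four]
  ring_nf

/-- `(1, 1.836, 1)` approximates the Perron eigenvector of `Mmat 0.1142 φ 1`, whose spectral radius
is about `0.9995`; the margins are below `10⁻³`, hence the need for `1.618 < φ`. -/
theorem Mmat_goldenRatio_weighted_row_sum_lt {α : ℝ} (hα0 : 0 < α) (hα1 : α < 0.1142)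
    (i : Fin 3) : ∑ j, |Mmat α φ 1 i j| * ![1, 1.836, 1] j < ![1, 1.836, 1] i := by
  have hφ' : 0 < φ - 1.618 := sub_pos.2 goldenRatio_gt_d3
  rw [Mmat_goldenRatio_one]
  set r := 2 - φ + α
  set s := α * φ + α ^ 2 * (3 * φ + 2)
  have hr : 0 < r := by linarith [goldenRatio_lt_two]
  have hs : 0 < s := by positivity
  have hαφ : 0 < α * φ := by positivity
  have outer : r + s * 1.836 < 1 := by
    nlinarith [mul_pos hα0 hφ', mul_pos (sub_pos.2 hα1) hφ', mul_pos hα0 hα0]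
  have middle : r + (s + α * φ) * 1.836 + r < 1.836 := by
    nlinarith [mul_pos hα0 hφ', mul_pos (sub_pos.2 hα1) hφ', mul_pos hα0 hα0]
  fin_cases i <;>
    simp only [Fin.zero_eta, Fin.mk_one, Fin.reduceFinMk, Fin.isValue, Fin.sum_univ_three,
      Matrix.of_apply, Matrix.cons_val', Matrix.cons_val_fin_one, Matrix.cons_val_zero,
      Matrix.cons_val_one, Matrix.cons_val, abs_zero, abs_of_pos hr, abs_of_pos hs,
      abs_of_pos (add_pos hs hαφ)] <;>
    linarith

/-- For every real `α` with `0 < α < 0.1142`, with `p = (1+√5)/2` and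
`q = 1`, every complex eigenvalue of `M(α,p,q)` has absolute value strictly less than
`1`; i.e. the spectral radius of `M(α,p,q)` is strictly less than `1`. -/
theorem eigenvalues_Mmat_lt_one (α : ℝ) (hα0 : 0 < α) (hα1 : α < 0.1142) :
    (∀ z ∈ spectrum ℂ ((Mmat α ((1 + Real.sqrt 5) / 2) 1).map (Complex.ofReal ·)),
      ‖z‖ < 1) ∧
    spectralRadius ℂ ((Mmat α ((1 + Real.sqrt 5) / 2) 1).map (Complex.ofReal ·)) < 1 := by
  have hρ : spectralRadius ℂ ((Mmat α φ 1).map (Complex.ofReal ·)) < 1 := by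
    refine spectralRadius_lt_one_of_weighted_row_sum_lt ![1, 1.836, 1] ?_ fun i => ?_
    · intro i
      fin_cases i <;> norm_num
    · simpa [Complex.norm_real] using Mmat_goldenRatio_weighted_row_sum_lt hα0 hα1 i
  refine ⟨fun z hz => ?_, hρ⟩
  have hz' : (‖z‖₊ : ENNReal) < 1 :=
    (le_iSup₂ (f := fun k _ => (‖k‖₊ : ENNReal)) z hz).trans_lt hρ
  exact_mod_cast hz'

end
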